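/- arXiv:2506.03315 — 2 statements merged into one kernel-verified Lean document; each statement's English description precedes it below -/
import Mathlib

section
/- Let R = ⟨A, 𝕊, 𝔼⟩ be a restricted choice structure, K ∈ 𝔼, and ∇ a K-minimal linear choice function for R. Then ∇ satisfies (SS4): for all S₁, S₂ ∈ 𝕊, if ∇(S₁) ⊆ S₁ and S₁ ⊆ S₂, then ∇(S₂) ⊆ S₂. -/
/-! `∇(S) ⊆ S` holds exactly when some `E ∈ 𝔼` lies inside `S`, and that condition is monotone
in `S`. Indeed, if `∇(S) ⊆ S` then `∇(S)` is either the minimum of `S` or `K`, both in `𝔼`.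
Conversely, if some `E ∈ 𝔼` lies in `S`, smoothness gives a minimal element of `S`, which is unique
because `≪` is linear, so `∇` picks it and it lies in `S`. -/

/-- `minOf 𝔼 r S` is the set of `r`-minimal elements among all `E ∈ 𝔼` with `E ⊆ S`. -/
def minOf {A : Type*} (𝔼 : Set (Set A)) (r : Set A → Set A → Prop) (S : Set A) :
    Set (Set A) :=
  {E | E ∈ 𝔼 ∧ E ⊆ S ∧ ∀ F ∈ 𝔼, F ⊆ S → r F E → r E F}

section

variable {A : Type*} {𝔼 : Set (Set A)} {r : Set A → Set A → Prop} {S K : Set A}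
  {N : Set A → Set A}

theorem minOf_subsingleton
    (htotal : ∀ E₁ ∈ 𝔼, ∀ E₂ ∈ 𝔼, r E₁ E₂ ∨ r E₂ E₁)
    (hanti : ∀ E₁ ∈ 𝔼, ∀ E₂ ∈ 𝔼, r E₁ E₂ → r E₂ E₁ → E₁ = E₂) :
    (minOf 𝔼 r S).Subsingleton := by
  rintro E ⟨hE, hES, hEmin⟩ F ⟨hF, hFS, hFmin⟩
  rcases htotal E hE F hF with h | h
  · exact hanti E hE F hF h (hFmin E hE hES h)
  · exact hanti E hE F hF (hEmin F hF hFS h) h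

theorem exists_subset_of_choice_subset (hK : K ∈ 𝔼)
    (hN : (∃ E, minOf 𝔼 r S = {E} ∧ N S = E) ∨ ((¬ ∃ E, minOf 𝔼 r S = {E}) ∧ N S = K))
    (hsub : N S ⊆ S) : ∃ E ∈ 𝔼, E ⊆ S := by
  rcases hN with ⟨E, hmin, -⟩ | ⟨-, hNK⟩
  · have hE : E ∈ minOf 𝔼 r S := hmin ▸ rfl
    exact ⟨E, hE.1, hE.2.1⟩
  · exact ⟨K, hK, hNK ▸ hsub⟩

theorem choice_subset_of_minOf_nonempty (hsing : (minOf 𝔼 r S).Subsingleton)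
    (hne : (minOf 𝔼 r S).Nonempty)
    (hN : (∃ E, minOf 𝔼 r S = {E} ∧ N S = E) ∨ ((¬ ∃ E, minOf 𝔼 r S = {E}) ∧ N S = K)) :
    N S ⊆ S := by
  rcases hN with ⟨E, hmin, hNE⟩ | ⟨hnot, -⟩
  · have hE : E ∈ minOf 𝔼 r S := hmin ▸ rfl
    exact hNE ▸ hE.2.1
  · obtain ⟨E, hE⟩ := hne
    exact absurd ⟨E, hsing.eq_singleton_of_mem hE⟩ hnot

end

theorem linear_choice_SS4_general {A : Type*}
    (𝕊 𝔼 : Set (Set A))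
    (K : Set A) (hK : K ∈ 𝔼)
    (ll : Set A → Set A → Prop)
    (htotal : ∀ E₁ ∈ 𝔼, ∀ E₂ ∈ 𝔼, ll E₁ E₂ ∨ ll E₂ E₁)
    (hanti : ∀ E₁ ∈ 𝔼, ∀ E₂ ∈ 𝔼, ll E₁ E₂ → ll E₂ E₁ → E₁ = E₂)
    (hsmooth : ∀ S ∈ 𝕊, (∃ E ∈ 𝔼, E ⊆ S) → (minOf 𝔼 ll S).Nonempty)
    (nabla : Set A → Set A)
    (hdef : ∀ S ∈ 𝕊,
      (∃ E, minOf 𝔼 ll S = {E} ∧ nabla S = E) ∨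
      ((¬ ∃ E, minOf 𝔼 ll S = {E}) ∧ nabla S = K))
    :
    ∀ S₁ ∈ 𝕊, ∀ S₂ ∈ 𝕊, nabla S₁ ⊆ S₁ → S₁ ⊆ S₂ → nabla S₂ ⊆ S₂ := by
  intro S₁ hS₁ S₂ hS₂ h₁ h₁₂
  obtain ⟨E, hE, hES₁⟩ := exists_subset_of_choice_subset hK (hdef S₁ hS₁) h₁
  exact choice_subset_of_minOf_nonempty (minOf_subsingleton htotal hanti)
    (hsmooth S₂ hS₂ ⟨E, hE, hES₁.trans h₁₂⟩) (hdef S₂ hS₂)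

/-- (SS4): a K-minimal linear choice function satisfies: if `∇(S₁) ⊆ S₁` and
`S₁ ⊆ S₂`, then `∇(S₂) ⊆ S₂`. -/
theorem linear_choice_SS4 {A : Type*}
    (𝕊 𝔼 : Set (Set A)) (hS : 𝕊.Nonempty) (hE : 𝔼.Nonempty) (hES : 𝔼 ⊆ 𝕊)
    (K : Set A) (hK : K ∈ 𝔼)
    (ll : Set A → Set A → Prop)
    (hrefl : ∀ E ∈ 𝔼, ll E E)
    (htrans : ∀ E₁ ∈ 𝔼, ∀ E₂ ∈ 𝔼, ∀ E₃ ∈ 𝔼, ll E₁ E₂ → ll E₂ E₃ → ll E₁ E₃)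
    (htotal : ∀ E₁ ∈ 𝔼, ∀ E₂ ∈ 𝔼, ll E₁ E₂ ∨ ll E₂ E₁)
    (hanti : ∀ E₁ ∈ 𝔼, ∀ E₂ ∈ 𝔼, ll E₁ E₂ → ll E₂ E₁ → E₁ = E₂)
    (hsmooth : ∀ S ∈ 𝕊, (∃ E ∈ 𝔼, E ⊆ S) → (minOf 𝔼 ll S).Nonempty)
    (hKmin : {E ∈ 𝔼 | ∀ E' ∈ 𝔼, ll E' E → ll E E'} = {K})
    (nabla : Set A → Set A)
    (hdef : ∀ S ∈ 𝕊,
      (∃ E, minOf 𝔼 ll S = {E} ∧ nabla S = E) ∨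
      ((¬ ∃ E, minOf 𝔼 ll S = {E}) ∧ nabla S = K))
    :
    ∀ S₁ ∈ 𝕊, ∀ S₂ ∈ 𝕊, nabla S₁ ⊆ S₁ → S₁ ⊆ S₂ → nabla S₂ ⊆ S₂ :=
  linear_choice_SS4_general 𝕊 𝔼 K hK ll htotal hanti hsmooth nabla hdef
end

section
/- Let R = ⟨A, 𝕊, 𝔼⟩ be a union-closed restricted choice structure, K ∈ 𝔼, and ∇ a K-minimal linear choice function for R. Then ∇ satisfies (SS6): for all S₁, S₂, S₃ ∈ 𝕊, if ∇(S₁ ∪ S₂) = S₃, then ∇(S₁ ∪ S₃) = S₃. -/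
open Set

section MinOf

variable {A : Type*} {𝔼 : Set (Set A)} {ll : Set A → Set A → Prop} {S E : Set A}

/-- `e = ∇(S)` for the `K`-minimal linear choice function `∇` of `ll`. -/
def IsLinearChoiceAt (𝔼 : Set (Set A)) (ll : Set A → Set A → Prop) (K S e : Set A) : Prop :=
  (∃ E, minOf 𝔼 ll S = {E} ∧ e = E) ∨ ((¬ ∃ E, minOf 𝔼 ll S = {E}) ∧ e = K)

theorem minOf_univ :
    minOf 𝔼 ll univ = {E ∈ 𝔼 | ∀ E' ∈ 𝔼, ll E' E → ll E E'} := by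
  ext E
  simp [minOf]

theorem le_of_mem_minOf (htotal : ∀ E₁ ∈ 𝔼, ∀ E₂ ∈ 𝔼, ll E₁ E₂ ∨ ll E₂ E₁)
    (hE : E ∈ minOf 𝔼 ll S) : ∀ F ∈ 𝔼, F ⊆ S → ll E F := fun F hF hFS =>
  (htotal E hE.1 F hF).elim id (hE.2.2 F hF hFS)

theorem minOf_eq_singleton (htotal : ∀ E₁ ∈ 𝔼, ∀ E₂ ∈ 𝔼, ll E₁ E₂ ∨ ll E₂ E₁)
    (hanti : ∀ E₁ ∈ 𝔼, ∀ E₂ ∈ 𝔼, ll E₁ E₂ → ll E₂ E₁ → E₁ = E₂)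
    (hE𝔼 : E ∈ 𝔼) (hES : E ⊆ S) (hle : ∀ F ∈ 𝔼, F ⊆ S → ll E F) :
    minOf 𝔼 ll S = {E} := by
  have hEmin : E ∈ minOf 𝔼 ll S := ⟨hE𝔼, hES, fun F hF hFS _ => hle F hF hFS⟩
  ext G
  refine ⟨fun hG => ?_, fun hG => hG ▸ hEmin⟩
  exact hanti G hG.1 E hE𝔼 (le_of_mem_minOf htotal hG E hE𝔼 hES) (hle G hG.1 hG.2.1)

theorem IsLinearChoiceAt.eq_of_minOf_eq_singleton {K e : Set A}
    (h : IsLinearChoiceAt 𝔼 ll K S e) (hmin : minOf 𝔼 ll S = {E}) : e = E := by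
  rcases h with ⟨E', hmin', rfl⟩ | ⟨hnot, -⟩
  · exact singleton_eq_singleton_iff.mp (hmin'.symm.trans hmin)
  · exact absurd ⟨E, hmin⟩ hnot

theorem IsLinearChoiceAt.le_or_eq (htotal : ∀ E₁ ∈ 𝔼, ∀ E₂ ∈ 𝔼, ll E₁ E₂ ∨ ll E₂ E₁)
    {K e : Set A} (h : IsLinearChoiceAt 𝔼 ll K S e) :
    (e ∈ 𝔼 ∧ e ⊆ S ∧ ∀ F ∈ 𝔼, F ⊆ S → ll e F) ∨ e = K := by
  rcases h with ⟨E', hmin, rfl⟩ | ⟨-, rfl⟩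
  · have hE' : e ∈ minOf 𝔼 ll S := hmin ▸ rfl
    exact .inl ⟨hE'.1, hE'.2.1, le_of_mem_minOf htotal hE'⟩
  · exact .inr rfl

end MinOf

theorem linear_choice_SS6_general {A : Type*}
    (𝕊 𝔼 : Set (Set A))
    (K : Set A) (hK : K ∈ 𝔼)
    (ll : Set A → Set A → Prop)
    (htotal : ∀ E₁ ∈ 𝔼, ∀ E₂ ∈ 𝔼, ll E₁ E₂ ∨ ll E₂ E₁)
    (hanti : ∀ E₁ ∈ 𝔼, ∀ E₂ ∈ 𝔼, ll E₁ E₂ → ll E₂ E₁ → E₁ = E₂)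
    (hKmin : {E ∈ 𝔼 | ∀ E' ∈ 𝔼, ll E' E → ll E E'} = {K})
    (nabla : Set A → Set A)
    (hdef : ∀ S ∈ 𝕊,
      (∃ E, minOf 𝔼 ll S = {E} ∧ nabla S = E) ∨
      ((¬ ∃ E, minOf 𝔼 ll S = {E}) ∧ nabla S = K))
    (hUC : ∀ S₁ ∈ 𝕊, ∀ S₂ ∈ 𝕊, S₁ ∪ S₂ ∈ 𝕊) :
    ∀ S₁ ∈ 𝕊, ∀ S₂ ∈ 𝕊, ∀ S₃ ∈ 𝕊,
      nabla (S₁ ∪ S₂) = S₃ → nabla (S₁ ∪ S₃) = S₃ := by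
  intro S₁ hS₁ S₂ hS₂ S₃ hS₃ h12
  have hK_le : ∀ F ∈ 𝔼, ll K F := fun F hF =>
    le_of_mem_minOf htotal (by rw [minOf_univ, hKmin]; rfl) F hF (subset_univ F)
  have hleast : S₃ ∈ 𝔼 ∧ ∀ F ∈ 𝔼, F ⊆ S₁ ∪ S₃ → ll S₃ F := by
    subst h12
    rcases IsLinearChoiceAt.le_or_eq htotal (hdef _ (hUC S₁ hS₁ S₂ hS₂)) with
      ⟨hmem, hsub, hle⟩ | hK'
    · exact ⟨hmem, fun F hF hFS => hle F hF (hFS.trans (union_subset subset_union_left hsub))⟩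
    · exact hK' ▸ ⟨hK, fun F hF _ => hK_le F hF⟩
  exact IsLinearChoiceAt.eq_of_minOf_eq_singleton (hdef _ (hUC S₁ hS₁ S₃ hS₃))
    (minOf_eq_singleton htotal hanti hleast.1 subset_union_right hleast.2)

/-- (SS6): for a union-closed restricted choice structure, a K-minimal linear choice
function satisfies: if `∇(S₁ ∪ S₂) = S₃`, then `∇(S₁ ∪ S₃) = S₃`. -/
theorem linear_choice_SS6 {A : Type*}
    (𝕊 𝔼 : Set (Set A)) (hS : 𝕊.Nonempty) (hE : 𝔼.Nonempty) (hES : 𝔼 ⊆ 𝕊)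
    (K : Set A) (hK : K ∈ 𝔼)
    (ll : Set A → Set A → Prop)
    (hrefl : ∀ E ∈ 𝔼, ll E E)
    (htrans : ∀ E₁ ∈ 𝔼, ∀ E₂ ∈ 𝔼, ∀ E₃ ∈ 𝔼, ll E₁ E₂ → ll E₂ E₃ → ll E₁ E₃)
    (htotal : ∀ E₁ ∈ 𝔼, ∀ E₂ ∈ 𝔼, ll E₁ E₂ ∨ ll E₂ E₁)
    (hanti : ∀ E₁ ∈ 𝔼, ∀ E₂ ∈ 𝔼, ll E₁ E₂ → ll E₂ E₁ → E₁ = E₂)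
    (hsmooth : ∀ S ∈ 𝕊, (∃ E ∈ 𝔼, E ⊆ S) → (minOf 𝔼 ll S).Nonempty)
    (hKmin : {E ∈ 𝔼 | ∀ E' ∈ 𝔼, ll E' E → ll E E'} = {K})
    (nabla : Set A → Set A)
    (hdef : ∀ S ∈ 𝕊,
      (∃ E, minOf 𝔼 ll S = {E} ∧ nabla S = E) ∨
      ((¬ ∃ E, minOf 𝔼 ll S = {E}) ∧ nabla S = K))
    (hUC : ∀ S₁ ∈ 𝕊, ∀ S₂ ∈ 𝕊, S₁ ∪ S₂ ∈ 𝕊) :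
    ∀ S₁ ∈ 𝕊, ∀ S₂ ∈ 𝕊, ∀ S₃ ∈ 𝕊,
      nabla (S₁ ∪ S₂) = S₃ → nabla (S₁ ∪ S₃) = S₃ :=
  linear_choice_SS6_general 𝕊 𝔼 K hK ll htotal hanti hKmin nabla hdef hUC
end
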